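/- Let L be an algebraic lattice, a ∈ L, and c a compact element with c ≰ a. Then there exists a completely meet-irreducible element b with a ≤ b and c ≰ b. -/

import Mathlib

/-- In an algebraic lattice, for `a` and a compact element `c ≰ a` there is a
completely meet-irreducible `b` with `a ≤ b` and `c ≰ b`. -/
theorem exists_completelyMeetIrreducible {α : Type*} [CompleteLattice α]
    [IsCompactlyGenerated α] (a c : α)
    (hc : IsCompactElement c) (h : ¬ c ≤ a) :
    ∃ b : α, a ≤ b ∧ ¬ c ≤ b ∧ ∀ X : Set α, sInf X = b → b ∈ X := by
  obtain ⟨b, hab, hbmax⟩ := zorn_le_nonempty₀ {x | a ≤ x ∧ ¬ c ≤ x}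
    (fun s hs hchain y hy => by
      refine ⟨sSup s, ⟨le_trans (hs hy).1 (le_sSup hy), fun hcs => ?_⟩, fun z hz => le_sSup hz⟩
      obtain ⟨x, hxs, hcx⟩ :=
        (CompleteLattice.isCompactElement_iff_le_of_directed_sSup_le α c).mp hc s ⟨y, hy⟩
          hchain.directedOn hcs
      exact (hs hxs).2 hcx) a ⟨le_rfl, h⟩
  refine ⟨b, hbmax.1.1, hbmax.1.2, fun X hX => ?_⟩
  by_contra hbX
  have hcx : ∀ x ∈ X, c ≤ x := fun x hx => by
    have hbx : b ≤ x := hX ▸ sInf_le hx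
    by_contra hcnx
    have hxb : x = b := (hbmax.2 ⟨hbmax.1.1.trans hbx, hcnx⟩ hbx).antisymm hbx
    exact hbX (hxb ▸ hx)
  exact hbmax.1.2 (hX ▸ le_sInf hcx)
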